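/- Let R ≅ F_1 × ··· × F_n, where each F_i is a field and n ≥ 2, and let I, J be two distinct vertices of the co-maximal ideal graph Γ(R). Then the distance d(I,J) in Γ(R) equals 3 if and only if I ∩ J = 0 and I + J ≠ R. -/

import Mathlib

/-! Common definitions: metric/strong-metric dimension, strong resolving graph,
independence number, and the co-maximal ideal graph of a commutative ring. -/

namespace CoMax

variable {V : Type*}

/-- `S` is a resolving set for `G`: the metric representations with respect to `S`
of vertices outside `S` are pairwise distinct. -/
def IsResolvingSet (G : SimpleGraph V) (S : Set V) : Prop :=
  ∀ u v : V, u ∉ S → v ∉ S → (∀ w ∈ S, G.dist u w = G.dist v w) → u = v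

/-- The metric dimension of `G`: the smallest cardinality of a resolving set. -/
noncomputable def metricDim (G : SimpleGraph V) : Cardinal :=
  ⨅ S : {S : Set V // IsResolvingSet G S}, Cardinal.mk ↥(S.1)

/-- `w` strongly resolves `u` and `v`: there is a shortest path from `u` to `w`
containing `v`, or a shortest path from `v` to `w` containing `u`. -/
def StronglyResolves (G : SimpleGraph V) (w u v : V) : Prop :=
  G.dist u v + G.dist v w = G.dist u w ∨ G.dist v u + G.dist u w = G.dist v w

/-- `S` is a strong resolving set for `G`: every pair of distinct vertices is
strongly resolved by some vertex of `S`. -/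
def IsStrongResolvingSet (G : SimpleGraph V) (S : Set V) : Prop :=
  ∀ u v : V, u ≠ v → ∃ w ∈ S, StronglyResolves G w u v

/-- The strong metric dimension of `G`: the smallest cardinality of a strong
resolving set. -/
noncomputable def sdim (G : SimpleGraph V) : Cardinal :=
  ⨅ S : {S : Set V // IsStrongResolvingSet G S}, Cardinal.mk ↥(S.1)

/-- `u` is maximally distant from `v`: `d(v,w) ≤ d(u,v)` for every neighbor `w` of `u`. -/
def MaximallyDistantFrom (G : SimpleGraph V) (u v : V) : Prop :=
  ∀ w : V, G.Adj u w → G.dist v w ≤ G.dist u v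

/-- `u` and `v` are mutually maximally distant. -/
def MutuallyMaximallyDistant (G : SimpleGraph V) (u v : V) : Prop :=
  MaximallyDistantFrom G u v ∧ MaximallyDistantFrom G v u

/-- The boundary `∂(G)` of `G`. -/
def boundarySet (G : SimpleGraph V) : Set V :=
  {u | ∃ v, v ≠ u ∧ MutuallyMaximallyDistant G u v}

/-- The strong resolving graph `G_SR` of `G`: vertices are the boundary vertices,
two of them being adjacent iff they are mutually maximally distant. -/
def srGraph (G : SimpleGraph V) : SimpleGraph ↥(boundarySet G) where
  Adj u v := u ≠ v ∧ MutuallyMaximallyDistant G u.1 v.1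
  symm := ⟨fun u v h => ⟨h.1.symm, h.2.2, h.2.1⟩⟩
  loopless := ⟨fun u h => h.1 rfl⟩

/-- The independence number `β(G)` of `G`. -/
noncomputable def indepNum (G : SimpleGraph V) : ℕ :=
  sSup {k | ∃ S : Set V,
    (∀ u ∈ S, ∀ v ∈ S, u ≠ v → ¬ G.Adj u v) ∧ S.Finite ∧ S.ncard = k}

/-- The vertices of the co-maximal ideal graph of `R`: proper ideals of `R`
not contained in the Jacobson radical of `R`. -/
def IsComaxVertex (R : Type*) [CommRing R] (I : Ideal R) : Prop :=
  I ≠ ⊤ ∧ ¬ I ≤ Ideal.jacobson (⊥ : Ideal R)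

/-- The co-maximal ideal graph `Γ(R)`: distinct vertices `I`, `J` are adjacent
iff `I + J = R`. -/
def comaxGraph (R : Type*) [CommRing R] :
    SimpleGraph {I : Ideal R // IsComaxVertex R I} where
  Adj I J := I ≠ J ∧ I.1 ⊔ J.1 = ⊤
  symm := ⟨fun I J h => ⟨h.1.symm, by rw [sup_comm]; exact h.2⟩⟩
  loopless := ⟨fun I h => h.1 rfl⟩

/-- The graph `Γ(R)**`: same vertices as `Γ(R)`, with distinct `I`, `J` adjacent
iff `I + J ≠ R`, `I ⊄ J` and `J ⊄ I`. -/
def comaxDoubleStar (R : Type*) [CommRing R] :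
    SimpleGraph {I : Ideal R // IsComaxVertex R I} where
  Adj I J := I ≠ J ∧ I.1 ⊔ J.1 ≠ ⊤ ∧ ¬ I.1 ≤ J.1 ∧ ¬ J.1 ≤ I.1
  symm := ⟨fun I J h => ⟨h.1.symm, by rw [sup_comm]; exact h.2.1, h.2.2.2, h.2.2.1⟩⟩
  loopless := ⟨fun I h => h.1 rfl⟩

/-- The ideal of a product ring `Π i, R i` whose members are the elements all of
whose components lie in the given family of ideals. -/
def piIdeal {ι : Type*} {R : ι → Type*} [∀ i, CommRing (R i)]
    (I : ∀ i, Ideal (R i)) : Ideal (∀ i, R i) where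
  carrier := {x | ∀ i, x i ∈ I i}
  add_mem' := fun ha hb i => add_mem (ha i) (hb i)
  zero_mem' := fun i => zero_mem _
  smul_mem' := fun c x hx i => (I i).smul_mem (c i) (hx i)

/-- The `i`-th component of an ideal of a product ring. -/
def comp {ι : Type*} {R : ι → Type*} [∀ i, CommRing (R i)]
    (K : Ideal (∀ i, R i)) (i : ι) : Ideal (R i) :=
  K.map (Pi.evalRingHom R i)

/-- The relation `I ∼ J`: for each `i`, the `i`-th component of `I` consists of
nilpotents iff the `i`-th component of `J` does. `[I] = [J]` iff `I ∼ J`. -/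
def simRel {ι : Type*} {R : ι → Type*} [∀ i, CommRing (R i)]
    (I J : Ideal (∀ i, R i)) : Prop :=
  ∀ i, comp I i ≤ nilradical (R i) ↔ comp J i ≤ nilradical (R i)

open Classical in
/-- The ideal `I′` obtained from `I` by replacing all of its nilpotent components by `0`. -/
noncomputable def primed {ι : Type*} {R : ι → Type*} [∀ i, CommRing (R i)]
    (K : Ideal (∀ i, R i)) : Ideal (∀ i, R i) :=
  piIdeal fun i => if comp K i ≤ nilradical (R i) then ⊥ else comp K i


section Helpers

variable {ι : Type*} [Fintype ι] [DecidableEq ι] {R : ι → Type*} [∀ i, CommRing (R i)]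

lemma mem_piIdeal {I : ∀ i, Ideal (R i)} {x : ∀ i, R i} :
    x ∈ piIdeal I ↔ ∀ i, x i ∈ I i := Iff.rfl

lemma eval_surjective (i : ι) : Function.Surjective (Pi.evalRingHom R i) :=
  fun y => ⟨Pi.single i y, Pi.single_eq_same i y⟩

lemma mem_comp_iff {K : Ideal (∀ i, R i)} {i : ι} {y : R i} :
    y ∈ comp K i ↔ ∃ x ∈ K, x i = y := by
  rw [comp, Ideal.mem_map_iff_of_surjective _ (eval_surjective i)]
  simp [Pi.evalRingHom]
  rfl

lemma comp_piIdeal (I : ∀ i, Ideal (R i)) (i : ι) : comp (piIdeal I) i = I i := by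
  ext y
  rw [mem_comp_iff]
  constructor
  · rintro ⟨x, hx, rfl⟩; exact hx i
  · intro hy
    refine ⟨Pi.single i y, fun j => ?_, Pi.single_eq_same i y⟩
    by_cases h : j = i
    · subst h; simpa using hy
    · rw [Pi.single_eq_of_ne h]; exact zero_mem _

lemma ideal_eq_pi (K : Ideal (∀ i, R i)) : K = piIdeal (fun i => comp K i) := by
  apply le_antisymm
  · intro x hx i
    exact Ideal.mem_map_of_mem _ hx
  · intro x hx
    choose a ha hae using fun i => mem_comp_iff.mp (hx i)
    have hx2 : x = ∑ i : ι, Pi.single i (1 : R i) * a i := by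
      funext j
      rw [Finset.sum_apply]
      rw [Finset.sum_eq_single j]
      · simp [hae j]
      · intro i _ hij
        simp [Pi.single_eq_of_ne (Ne.symm hij)]
      · simp
    rw [hx2]
    exact Ideal.sum_mem _ fun i _ => K.mul_mem_left _ (ha i)

lemma le_iff_comp {A B : Ideal (∀ i, R i)} : A ≤ B ↔ ∀ i, comp A i ≤ comp B i := by
  constructor
  · intro h i; exact Ideal.map_mono h
  · intro h
    rw [ideal_eq_pi A, ideal_eq_pi B]
    intro x hx i
    exact h i (hx i)

lemma comp_top (i : ι) : comp (⊤ : Ideal (∀ i, R i)) i = ⊤ := Ideal.map_top _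

lemma comp_bot (i : ι) : comp (⊥ : Ideal (∀ i, R i)) i = ⊥ := Ideal.map_bot

lemma eq_top_iff_comp {A : Ideal (∀ i, R i)} : A = ⊤ ↔ ∀ i, comp A i = ⊤ := by
  constructor
  · rintro rfl i; exact comp_top i
  · intro h
    rw [eq_top_iff, le_iff_comp]
    intro i; rw [comp_top, h i]

lemma eq_bot_iff_comp {A : Ideal (∀ i, R i)} : A = ⊥ ↔ ∀ i, comp A i = ⊥ := by
  constructor
  · rintro rfl i; exact comp_bot i
  · intro h
    rw [eq_bot_iff, le_iff_comp]
    intro i; rw [comp_bot, h i]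

lemma comp_sup (A B : Ideal (∀ i, R i)) (i : ι) :
    comp (A ⊔ B) i = comp A i ⊔ comp B i := Ideal.map_sup _ _ _

lemma piIdeal_inf (I J : ∀ i, Ideal (R i)) :
    piIdeal I ⊓ piIdeal J = piIdeal (fun i => I i ⊓ J i) := by
  ext x
  simp only [Submodule.mem_inf, mem_piIdeal, Ideal.mem_inf]
  exact ⟨fun ⟨h1, h2⟩ i => ⟨h1 i, h2 i⟩, fun h => ⟨fun i => (h i).1, fun i => (h i).2⟩⟩

lemma comp_inf (A B : Ideal (∀ i, R i)) (i : ι) :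
    comp (A ⊓ B) i = comp A i ⊓ comp B i := by
  conv_lhs => rw [ideal_eq_pi A, ideal_eq_pi B, piIdeal_inf, comp_piIdeal]

lemma ideal_ext_comp {A B : Ideal (∀ i, R i)} (h : ∀ i, comp A i = comp B i) : A = B := by
  rw [ideal_eq_pi A, ideal_eq_pi B]; simp only [h]

lemma jacobson_bot_pi {F : ι → Type*} [∀ i, Field (F i)] :
    Ideal.jacobson (⊥ : Ideal (∀ i, F i)) = ⊥ := by
  rw [eq_bot_iff]
  intro x hx
  rw [Ideal.mem_jacobson_bot] at hx
  simp only [Ideal.mem_bot]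
  by_contra hne
  have : ∃ i, x i ≠ 0 := by
    by_contra h; push_neg at h; exact hne (funext h)
  obtain ⟨i, hi⟩ := this
  have := hx (Pi.single i (-(x i)⁻¹))
  have h0 : (x * Pi.single i (-(x i)⁻¹) + 1) i = 0 := by
    have : x i * -(x i)⁻¹ = -1 := by
      rw [mul_neg, mul_inv_cancel₀ hi]
    simp [Pi.single_eq_same, this]
  have : IsUnit ((x * Pi.single i (-(x i)⁻¹) + 1) i) := this.map (Pi.evalRingHom F i)
  rw [h0] at this
  exact this.ne_zero rfl

end Helpers

/-- For `R ≅ F_1 × ⋯ × F_n` a product of fields, `n ≥ 2`, and distinct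
vertices `I`, `J` of `Γ(R)`: `d(I,J) = 3` iff `I ∩ J = 0` and `I + J ≠ R`. -/
theorem stmt_5 (n : ℕ) (hn : 2 ≤ n) (F : Fin n → Type*) [∀ i, Field (F i)]
    (I J : {I : Ideal (∀ i, F i) // IsComaxVertex (∀ i, F i) I}) (hIJ : I ≠ J) :
    (comaxGraph (∀ i, F i)).dist I J = 3 ↔ I.1 ⊓ J.1 = ⊥ ∧ I.1 ⊔ J.1 ≠ ⊤ := by
  classical
  have hjac : Ideal.jacobson (⊥ : Ideal (∀ i, F i)) = ⊥ := jacobson_bot_pi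
  have hvert : ∀ K : Ideal (∀ i, F i), IsComaxVertex (∀ i, F i) K ↔ K ≠ ⊤ ∧ K ≠ ⊥ := by
    intro K
    unfold IsComaxVertex
    rw [hjac, le_bot_iff]
  have hbt : ∀ i : Fin n, (⊥ : Ideal (F i)) ≠ ⊤ := by
    intro i h
    have h1 : (1 : F i) ∈ (⊥ : Ideal (F i)) := h ▸ Submodule.mem_top
    exact one_ne_zero (Ideal.mem_bot.mp h1)
  have sup_top : ∀ A B : Ideal (∀ i, F i),
      A ⊔ B = ⊤ ↔ ∀ i, comp A i = ⊤ ∨ comp B i = ⊤ := by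
    intro A B
    rw [eq_top_iff_comp]
    refine forall_congr' fun i => ?_
    rw [comp_sup]
    constructor
    · intro h
      rcases Ideal.eq_bot_or_top (comp A i) with h1 | h1
      · right; rwa [h1, bot_sup_eq] at h
      · left; exact h1
    · rintro (h | h) <;> simp [h]
  have inf_bot : ∀ A B : Ideal (∀ i, F i),
      A ⊓ B = ⊥ ↔ ∀ i, comp A i = ⊥ ∨ comp B i = ⊥ := by
    intro A B
    rw [eq_bot_iff_comp]
    refine forall_congr' fun i => ?_
    rw [comp_inf]
    constructor
    · intro h
      rcases Ideal.eq_bot_or_top (comp A i) with h1 | h1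
      · left; exact h1
      · right; rwa [h1, top_inf_eq] at h
    · rintro (h | h)
      · rw [h, bot_inf_eq]
      · rw [h, inf_bot_eq]
  have hIt : I.1 ≠ ⊤ := I.2.1
  have hIb : I.1 ≠ ⊥ := ((hvert I.1).mp I.2).2
  have hJt : J.1 ≠ ⊤ := J.2.1
  have hJb : J.1 ≠ ⊥ := ((hvert J.1).mp J.2).2
  constructor
  · intro hd
    have hsup : I.1 ⊔ J.1 ≠ ⊤ := by
      intro h
      have hadj : (comaxGraph (∀ i, F i)).Adj I J := ⟨hIJ, h⟩
      have := SimpleGraph.dist_eq_one_iff_adj.mpr hadj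
      omega
    refine ⟨?_, hsup⟩
    by_contra hinf
    have hex : ∃ i, comp I.1 i = ⊤ ∧ comp J.1 i = ⊤ := by
      by_contra h
      push_neg at h
      apply hinf
      rw [inf_bot]
      intro i
      rcases Ideal.eq_bot_or_top (comp I.1 i) with h1 | h1
      · left; exact h1
      · rcases Ideal.eq_bot_or_top (comp J.1 i) with h2 | h2
        · right; exact h2
        · exact absurd h2 (h i h1)
    obtain ⟨i0, hI0, hJ0⟩ := hex
    set Kid : Ideal (∀ i, F i) :=
      piIdeal (fun i => if i = i0 then (⊥ : Ideal (F i)) else ⊤) with hKid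
    have hKcomp : ∀ i, comp Kid i = if i = i0 then (⊥ : Ideal (F i)) else ⊤ :=
      fun i => comp_piIdeal _ i
    have hKvert : IsComaxVertex (∀ i, F i) Kid := by
      rw [hvert]
      constructor
      · intro h
        have := eq_top_iff_comp.mp h i0
        rw [hKcomp i0, if_pos rfl] at this
        exact hbt i0 this
      · intro h
        obtain ⟨i1, hi1⟩ := Fintype.exists_ne_of_one_lt_card
          (by rw [Fintype.card_fin]; omega) i0
        have := eq_bot_iff_comp.mp h i1
        rw [hKcomp i1, if_neg hi1] at this
        exact hbt i1 this.symm
    have hadjIK : (comaxGraph (∀ i, F i)).Adj I ⟨Kid, hKvert⟩ := by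
      constructor
      · intro h
        have hval : I.1 = Kid := congrArg Subtype.val h
        have : comp I.1 i0 = comp Kid i0 := by rw [hval]
        rw [hI0, hKcomp i0, if_pos rfl] at this
        exact hbt i0 this.symm
      · rw [sup_top]
        intro i
        by_cases h : i = i0
        · subst h; left; exact hI0
        · right; rw [hKcomp i, if_neg h]
    have hadjKJ : (comaxGraph (∀ i, F i)).Adj ⟨Kid, hKvert⟩ J := by
      constructor
      · intro h
        have hval : Kid = J.1 := congrArg Subtype.val h
        have : comp Kid i0 = comp J.1 i0 := by rw [hval]
        rw [hJ0, hKcomp i0, if_pos rfl] at this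
        exact hbt i0 this
      · rw [sup_top]
        intro i
        by_cases h : i = i0
        · subst h; right; exact hJ0
        · left; rw [hKcomp i, if_neg h]
    have hw : (comaxGraph (∀ i, F i)).dist I J ≤ 2 := by
      have := SimpleGraph.dist_le
        (SimpleGraph.Walk.cons hadjIK (SimpleGraph.Walk.cons hadjKJ SimpleGraph.Walk.nil))
      simpa using this
    omega
  · rintro ⟨hinf, hsup⟩
    have hinf' : ∀ i, comp I.1 i = ⊥ ∨ comp J.1 i = ⊥ := (inf_bot _ _).mp hinf
    -- complement ideals
    set Kid : Ideal (∀ i, F i) :=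
      piIdeal (fun i => if comp I.1 i = ⊤ then (⊥ : Ideal (F i)) else ⊤) with hKid
    set Lid : Ideal (∀ i, F i) :=
      piIdeal (fun i => if comp J.1 i = ⊤ then (⊥ : Ideal (F i)) else ⊤) with hLid
    have hKcomp : ∀ i, comp Kid i = if comp I.1 i = ⊤ then (⊥ : Ideal (F i)) else ⊤ :=
      fun i => comp_piIdeal _ i
    have hLcomp : ∀ i, comp Lid i = if comp J.1 i = ⊤ then (⊥ : Ideal (F i)) else ⊤ :=
      fun i => comp_piIdeal _ i
    -- index where comp I = ⊤, comp J = ⊤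
    have hexI : ∃ i, comp I.1 i = ⊤ := by
      by_contra h
      push_neg at h
      exact hIb (eq_bot_iff_comp.mpr fun i =>
        (Ideal.eq_bot_or_top (comp I.1 i)).resolve_right (h i))
    have hexJ : ∃ i, comp J.1 i = ⊤ := by
      by_contra h
      push_neg at h
      exact hJb (eq_bot_iff_comp.mpr fun i =>
        (Ideal.eq_bot_or_top (comp J.1 i)).resolve_right (h i))
    obtain ⟨iI, hiI⟩ := hexI
    obtain ⟨iJ, hiJ⟩ := hexJ
    have hexI' : ∃ i, comp I.1 i ≠ ⊤ := by
      by_contra h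
      push_neg at h
      exact hIt (eq_top_iff_comp.mpr h)
    have hexJ' : ∃ i, comp J.1 i ≠ ⊤ := by
      by_contra h
      push_neg at h
      exact hJt (eq_top_iff_comp.mpr h)
    obtain ⟨iI', hiI'⟩ := hexI'
    obtain ⟨iJ', hiJ'⟩ := hexJ'
    have hKvert : IsComaxVertex (∀ i, F i) Kid := by
      rw [hvert]
      constructor
      · intro h
        have := eq_top_iff_comp.mp h iI
        rw [hKcomp iI, if_pos hiI] at this
        exact hbt iI this
      · intro h
        have := eq_bot_iff_comp.mp h iI'
        rw [hKcomp iI', if_neg hiI'] at this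
        exact hbt iI' this.symm
    have hLvert : IsComaxVertex (∀ i, F i) Lid := by
      rw [hvert]
      constructor
      · intro h
        have := eq_top_iff_comp.mp h iJ
        rw [hLcomp iJ, if_pos hiJ] at this
        exact hbt iJ this
      · intro h
        have := eq_bot_iff_comp.mp h iJ'
        rw [hLcomp iJ', if_neg hiJ'] at this
        exact hbt iJ' this.symm
    -- at iI : comp I = ⊤ so comp J iI = ⊥, comp K iI = ⊥, comp L iI = ⊤
    have hJiI : comp J.1 iI = ⊥ := by
      rcases hinf' iI with h | h
      · rw [hiI] at h; exact absurd h.symm (hbt iI)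
      · exact h
    have hIiJ : comp I.1 iJ = ⊥ := by
      rcases hinf' iJ with h | h
      · exact h
      · rw [hiJ] at h; exact absurd h.symm (hbt iJ)
    have hadjIK : (comaxGraph (∀ i, F i)).Adj I ⟨Kid, hKvert⟩ := by
      constructor
      · intro h
        have hval : I.1 = Kid := congrArg Subtype.val h
        have : comp I.1 iI = comp Kid iI := by rw [hval]
        rw [hiI, hKcomp iI, if_pos hiI] at this
        exact hbt iI this.symm
      · rw [sup_top]
        intro i
        by_cases h : comp I.1 i = ⊤
        · left; exact h
        · right; rw [hKcomp i, if_neg h]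
    have hadjKL : (comaxGraph (∀ i, F i)).Adj ⟨Kid, hKvert⟩ ⟨Lid, hLvert⟩ := by
      constructor
      · intro h
        have hval : Kid = Lid := congrArg Subtype.val h
        have : comp Kid iI = comp Lid iI := by rw [hval]
        rw [hKcomp iI, if_pos hiI, hLcomp iI,
          if_neg (fun hc => hbt iI (hJiI ▸ hc))] at this
        exact hbt iI this
      · rw [sup_top]
        intro i
        by_cases h : comp I.1 i = ⊤
        · right
          have hJi : comp J.1 i = ⊥ := by
            rcases hinf' i with h1 | h1
            · rw [h] at h1; exact absurd h1.symm (hbt i)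
            · exact h1
          rw [hLcomp i, if_neg (fun hc => hbt i (hJi ▸ hc))]
        · left; rw [hKcomp i, if_neg h]
    have hadjLJ : (comaxGraph (∀ i, F i)).Adj ⟨Lid, hLvert⟩ J := by
      constructor
      · intro h
        have hval : Lid = J.1 := congrArg Subtype.val h
        have : comp Lid iJ = comp J.1 iJ := by rw [hval]
        rw [hiJ, hLcomp iJ, if_pos hiJ] at this
        exact hbt iJ this
      · rw [sup_top]
        intro i
        by_cases h : comp J.1 i = ⊤
        · right; exact h
        · left; rw [hLcomp i, if_neg h]
    set w : (comaxGraph (∀ i, F i)).Walk I J :=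
      SimpleGraph.Walk.cons hadjIK
        (SimpleGraph.Walk.cons hadjKL (SimpleGraph.Walk.cons hadjLJ SimpleGraph.Walk.nil))
      with hw
    have hd3 : (comaxGraph (∀ i, F i)).dist I J ≤ 3 := by
      have := SimpleGraph.dist_le w
      simpa [hw] using this
    have hreach : (comaxGraph (∀ i, F i)).Reachable I J := ⟨w⟩
    have hd0 : (comaxGraph (∀ i, F i)).dist I J ≠ 0 := by
      intro h
      exact hIJ (hreach.dist_eq_zero_iff.mp h)
    have hd1 : (comaxGraph (∀ i, F i)).dist I J ≠ 1 := by
      intro h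
      exact hsup (SimpleGraph.dist_eq_one_iff_adj.mp h).2
    have hd2 : (comaxGraph (∀ i, F i)).dist I J ≠ 2 := by
      intro h
      obtain ⟨w2, hw2⟩ := hreach.exists_walk_length_eq_dist
      rw [h] at hw2
      have hm1 : (comaxGraph (∀ i, F i)).Adj I (w2.getVert 1) := by
        have := w2.adj_getVert_succ (i := 0) (by omega)
        simpa using this
      have hm2 : (comaxGraph (∀ i, F i)).Adj (w2.getVert 1) J := by
        have h2 := w2.adj_getVert_succ (i := 1) (by omega)
        have hend : w2.getVert 2 = J := by
          rw [← hw2]; exact w2.getVert_length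
        rwa [show (1 : ℕ) + 1 = 2 from rfl, hend] at h2
      set M := w2.getVert 1 with hM
      have hMt : M.1 = ⊤ := by
        rw [eq_top_iff_comp]
        intro i
        rcases Ideal.eq_bot_or_top (comp M.1 i) with hMi | hMi
        · exfalso
          have hIi : comp I.1 i = ⊤ := by
            rcases (sup_top _ _).mp hm1.2 i with h1 | h1
            · exact h1
            · rw [hMi] at h1; exact absurd h1 (hbt i)
          have hJi : comp J.1 i = ⊤ := by
            rcases (sup_top _ _).mp hm2.2 i with h1 | h1
            · rw [hMi] at h1; exact absurd h1 (hbt i)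
            · exact h1
          rcases hinf' i with h1 | h1
          · rw [hIi] at h1; exact hbt i h1.symm
          · rw [hJi] at h1; exact hbt i h1.symm
        · exact hMi
      exact M.2.1 hMt
    omega

end CoMax
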